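/- arXiv:2307.11322 — 2 statements merged into one kernel-verified Lean document; each statement's English description precedes it below -/
import Mathlib

section
/- Let X be a compact metric space, T : X → X a continuous map, and (h_n)_{n≥1} a sequence of continuous functions h_n : X → ℝ that is almost additive with respect to T with constant C > 0, and suppose lim_{n→∞} ‖h_n‖_∞/n = 0. Then for every periodic point x₀ ∈ X (i.e. T^k(x₀) = x₀ for some k ≥ 1) there exists a constant L ≥ 0 such that |h_n(x₀)| ≤ L for every n ≥ 1; explicitly, one may take L = max{|min{A − 2C, −C}|, |max{B + 2C, C}|} where A = min{h_r(x₀) : 1 ≤ r < k} and B = max{h_r(x₀) : 1 ≤ r < k}. -/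
/-!
At a periodic point `x` of period `p`, almost additivity gives
`|h (m * p) x - m * h p x| ≤ m * C`; dividing by `m` and using the sublinear growth of `h`
forces `|h p x| ≤ C`, and the same holds for every multiple of `p`. Writing `n = q * p + r`
with `0 ≤ r < p`, almost additivity then keeps `h n x` within `2 * C` of `h r x`.
-/

open Filter Topology Function

def IsAlmostAdditive {X : Type*} (T : X → X) (h : ℕ → X → ℝ) (C : ℝ) : Prop :=
  ∀ (x : X) (n m : ℕ), 1 ≤ n → 1 ≤ m →
    -C + h n x + h m (T^[n] x) ≤ h (n + m) x ∧ h (n + m) x ≤ h n x + h m (T^[n] x) + C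

theorem tendsto_apply_div_natCast_of_tendsto_iSup_abs_div {X : Type*} {f : ℕ → X → ℝ}
    (hbdd : ∀ n, BddAbove (Set.range fun x => |f n x|))
    (hlim : Tendsto (fun n : ℕ => (⨆ x, |f n x|) / (n : ℝ)) atTop (𝓝 0)) (x : X) :
    Tendsto (fun n : ℕ => f n x / n) atTop (𝓝 0) := by
  refine squeeze_zero_norm (fun n => ?_) hlim
  rw [Real.norm_eq_abs, abs_div, Nat.abs_cast]
  gcongr
  exact le_ciSup (hbdd n) x

theorem tendsto_apply_mul_div_natCast {a : ℕ → ℝ} (ha : Tendsto (fun n : ℕ => a n / n) atTop (𝓝 0))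
    {p : ℕ} (hp : 1 ≤ p) : Tendsto (fun m : ℕ => a (p * m) / m) atTop (𝓝 0) := by
  have hmul : Tendsto (fun m : ℕ => p * m) atTop atTop :=
    tendsto_atTop_mono (fun m => Nat.le_mul_of_pos_left m hp) tendsto_id
  have hp0 : (p : ℝ) ≠ 0 := by positivity
  have hlim := (ha.comp hmul).mul_const (p : ℝ)
  rw [zero_mul] at hlim
  refine hlim.congr fun m => ?_
  simp only [comp_apply, Nat.cast_mul]
  rw [div_mul_eq_mul_div, mul_comm _ (p : ℝ), mul_div_mul_left _ _ hp0]

theorem abs_le_of_abs_sub_mul_le {a : ℕ → ℝ} {c C : ℝ}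
    (ha : Tendsto (fun m : ℕ => a m / m) atTop (𝓝 0))
    (hac : ∀ m : ℕ, 1 ≤ m → |a m - m * c| ≤ m * C) : |c| ≤ C := by
  have hdist : ∀ᶠ m : ℕ in atTop, |a m / m - c| ≤ C := by
    filter_upwards [eventually_ge_atTop 1] with m hm
    have hm0 : (0 : ℝ) < m := by exact_mod_cast hm
    rw [div_sub' hm0.ne', abs_div, abs_of_pos hm0, div_le_iff₀ hm0, mul_comm C]
    exact hac m hm
  have hlim : Tendsto (fun m : ℕ => |a m / m - c|) atTop (𝓝 |0 - c|) :=
    (ha.sub_const c).abs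
  simpa using le_of_tendsto hlim hdist

namespace IsAlmostAdditive

variable {X : Type*} {T : X → X} {h : ℕ → X → ℝ} {C : ℝ}

theorem abs_sub_add_le (hAA : IsAlmostAdditive T h C) (x : X) {n m : ℕ} (hn : 1 ≤ n)
    (hm : 1 ≤ m) : |h (n + m) x - (h n x + h m (T^[n] x))| ≤ C := by
  obtain ⟨hlo, hhi⟩ := hAA x n m hn hm
  rw [abs_sub_le_iff]
  constructor <;> linarith

theorem abs_sub_mul_le_of_isPeriodicPt (hAA : IsAlmostAdditive T h C) (hC : 0 ≤ C) {x : X}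
    {p : ℕ} (hp : 1 ≤ p) (hper : IsPeriodicPt T p x) {m : ℕ} (hm : 1 ≤ m) :
    |h (p * m) x - m * h p x| ≤ m * C := by
  induction m, hm using Nat.le_induction with
  | base => simpa using hC
  | succ m hm ih =>
    have hstep :=
      hAA.abs_sub_add_le x (n := p * m) (Nat.one_le_iff_ne_zero.mpr (by positivity)) hp
    rw [(hper.mul_const m).eq] at hstep
    rw [Nat.mul_succ]
    push_cast
    calc |h (p * m + p) x - (m + 1) * h p x|
        = |(h (p * m + p) x - (h (p * m) x + h p x)) + (h (p * m) x - m * h p x)| := by ring_nf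
      _ ≤ C + m * C := (abs_add_le _ _).trans (add_le_add hstep ih)
      _ = (m + 1) * C := by ring

theorem abs_le_of_isPeriodicPt (hAA : IsAlmostAdditive T h C) (hC : 0 ≤ C) {x : X}
    (hlim : Tendsto (fun n : ℕ => h n x / n) atTop (𝓝 0)) {p : ℕ} (hp : 1 ≤ p)
    (hper : IsPeriodicPt T p x) : |h p x| ≤ C :=
  abs_le_of_abs_sub_mul_le (tendsto_apply_mul_div_natCast hlim hp)
    fun _ hm => hAA.abs_sub_mul_le_of_isPeriodicPt hC hp hper hm

theorem mem_Icc_of_isPeriodicPt (hAA : IsAlmostAdditive T h C) (hC : 0 ≤ C) {x : X}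
    (hlim : Tendsto (fun n : ℕ => h n x / n) atTop (𝓝 0)) {p : ℕ} (hp : 1 ≤ p)
    (hper : IsPeriodicPt T p x) {A B : ℝ}
    (hAB : ∀ r : ℕ, 1 ≤ r → r < p → A ≤ h r x ∧ h r x ≤ B) {n : ℕ} (hn : 1 ≤ n) :
    h n x ∈ Set.Icc (min (A - 2 * C) (-C)) (max (B + 2 * C) C) := by
  have hmultiple : ∀ q : ℕ, 1 ≤ q → |h (p * q) x| ≤ C := fun q hq =>
    hAA.abs_le_of_isPeriodicPt hC hlim (Nat.one_le_iff_ne_zero.mpr (by positivity))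
      (hper.mul_const q)
  obtain ⟨q, r, hr, rfl⟩ : ∃ q r : ℕ, r < p ∧ p * q + r = n :=
    ⟨n / p, n % p, Nat.mod_lt n (by omega), Nat.div_add_mod n p⟩
  rcases Nat.eq_zero_or_pos r with rfl | hr1
  · have hq : 1 ≤ q := Nat.one_le_iff_ne_zero.mpr (by rintro rfl; simp at hn)
    obtain ⟨hlo, hhi⟩ := abs_le.mp (hmultiple q hq)
    exact ⟨(min_le_right _ _).trans hlo, hhi.trans (le_max_right _ _)⟩
  obtain ⟨hA, hB⟩ := hAB r hr1 hr
  rcases Nat.eq_zero_or_pos q with rfl | hq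
  · simp only [mul_zero, zero_add]
    exact ⟨(min_le_left _ _).trans (by linarith), (by linarith : h r x ≤ B + 2 * C).trans
      (le_max_left _ _)⟩
  have hsplit :=
    hAA.abs_sub_add_le x (n := p * q) (Nat.one_le_iff_ne_zero.mpr (by positivity)) hr1
  rw [(hper.mul_const q).eq] at hsplit
  obtain ⟨hlo, hhi⟩ := abs_le.mp (hmultiple q hq)
  obtain ⟨hslo, hshi⟩ := abs_le.mp hsplit
  exact ⟨(min_le_left _ _).trans (by linarith), (by linarith : h (p * q + r) x ≤ B + 2 * C).trans
    (le_max_left _ _)⟩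

end IsAlmostAdditive

theorem statement3_general {X : Type*} [MetricSpace X] [CompactSpace X]
    (T : X → X)
    (h : ℕ → X → ℝ) (hcont : ∀ n, Continuous (h n))
    (C : ℝ) (hC : 0 < C)
    (hAA : ∀ (x : X) (n m : ℕ), 1 ≤ n → 1 ≤ m →
      -C + h n x + h m (T^[n] x) ≤ h (n + m) x ∧
        h (n + m) x ≤ h n x + h m (T^[n] x) + C)
    (hlim : Tendsto (fun n : ℕ => (⨆ x : X, |h n x|) / (n : ℝ)) atTop (nhds 0))
    (x₀ : X) (k : ℕ) (hk : 1 ≤ k) (hper : T^[k] x₀ = x₀)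
    (A B : ℝ)
    (hA : A = sInf ((fun r : ℕ => h r x₀) '' {r : ℕ | 1 ≤ r ∧ r < k}))
    (hB : B = sSup ((fun r : ℕ => h r x₀) '' {r : ℕ | 1 ≤ r ∧ r < k})) :
    0 ≤ max |min (A - 2 * C) (-C)| |max (B + 2 * C) C| ∧
      ∀ (n : ℕ), 1 ≤ n →
        |h n x₀| ≤ max |min (A - 2 * C) (-C)| |max (B + 2 * C) C| := by
  have hpointwise := tendsto_apply_div_natCast_of_tendsto_iSup_abs_div
    (fun n => (isCompact_range (hcont n).abs).bddAbove) hlim x₀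
  have hfin : ((fun r : ℕ => h r x₀) '' {r : ℕ | 1 ≤ r ∧ r < k}).Finite :=
    ((Set.finite_Iio k).subset fun _ hr => hr.2).image _
  have hAB : ∀ r : ℕ, 1 ≤ r → r < k → A ≤ h r x₀ ∧ h r x₀ ≤ B := fun r hr1 hr => by
    have hmem : h r x₀ ∈ (fun r : ℕ => h r x₀) '' {r : ℕ | 1 ≤ r ∧ r < k} := ⟨r, ⟨hr1, hr⟩, rfl⟩
    exact ⟨hA ▸ csInf_le hfin.bddBelow hmem, hB ▸ le_csSup hfin.bddAbove hmem⟩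
  refine ⟨le_max_of_le_left (abs_nonneg _), fun n hn => ?_⟩
  obtain ⟨hlo, hhi⟩ :=
    IsAlmostAdditive.mem_Icc_of_isPeriodicPt hAA hC.le hpointwise hk hper hAB hn
  exact abs_le_max_abs_abs hlo hhi

theorem statement3 {X : Type*} [MetricSpace X] [CompactSpace X]
    (T : X → X) (hT : Continuous T)
    (h : ℕ → X → ℝ) (hcont : ∀ n, Continuous (h n))
    (C : ℝ) (hC : 0 < C)
    (hAA : ∀ (x : X) (n m : ℕ), 1 ≤ n → 1 ≤ m →
      -C + h n x + h m (T^[n] x) ≤ h (n + m) x ∧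
        h (n + m) x ≤ h n x + h m (T^[n] x) + C)
    (hlim : Tendsto (fun n : ℕ => (⨆ x : X, |h n x|) / (n : ℝ)) atTop (nhds 0))
    (x₀ : X) (k : ℕ) (hk : 1 ≤ k) (hper : T^[k] x₀ = x₀)
    (A B : ℝ)
    (hA : A = sInf ((fun r : ℕ => h r x₀) '' {r : ℕ | 1 ≤ r ∧ r < k}))
    (hB : B = sSup ((fun r : ℕ => h r x₀) '' {r : ℕ | 1 ≤ r ∧ r < k})) :
    0 ≤ max |min (A - 2 * C) (-C)| |max (B + 2 * C) C| ∧
      ∀ (n : ℕ), 1 ≤ n →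
        |h n x₀| ≤ max |min (A - 2 * C) (-C)| |max (B + 2 * C) C| :=
  statement3_general T h hcont C hC hAA hlim x₀ k hk hper A B hA hB
end

section
/- Let (X,d) be a compact metric space and T : X → X a continuous map satisfying the Closing Lemma and having a point with dense orbit. Let f : X → ℝ be a continuous function satisfying the Walters property. Then f is cohomologous to zero (i.e. there exists a continuous q : X → ℝ with f = q∘T − q) if and only if ∫_X f dμ = 0 for every T-invariant Borel probability measure μ on X. -/
open Filter MeasureTheory Topology

/-- Birkhoff sum `S_n f = ∑_{k=0}^{n-1} f ∘ T^k`. -/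
noncomputable def birkhoff {X : Type*} (T : X → X) (f : X → ℝ) (n : ℕ) (x : X) : ℝ :=
  ∑ k ∈ Finset.range n, f (T^[k] x)

private lemma birkhoff_add {X : Type*} (T : X → X) (f : X → ℝ) (m p : ℕ) (x : X) :
    birkhoff T f (m + p) x = birkhoff T f m x + birkhoff T f p (T^[m] x) := by
  unfold birkhoff
  rw [Finset.sum_range_add]
  congr 1
  refine Finset.sum_congr rfl fun k _ => ?_
  rw [← Function.iterate_add_apply, Nat.add_comm]

theorem statement7 {X : Type*} [MetricSpace X] [CompactSpace X]
    [MeasurableSpace X] [BorelSpace X]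
    (T : X → X) (hT : Continuous T)
    (hClosing : ∀ ε > (0 : ℝ), ∃ δ > (0 : ℝ), ∀ (x : X) (n : ℕ), 1 ≤ n →
      dist (T^[n] x) x < δ →
      ∃ y : X, T^[n] y = y ∧ ∀ k < n, dist (T^[k] x) (T^[k] y) < ε)
    (hDense : ∃ x : X, Dense (Set.range fun n : ℕ => T^[n] x))
    (f : X → ℝ) (hf : Continuous f)
    (hWalters : ∀ κ > (0 : ℝ), ∃ ε > (0 : ℝ), ∀ (x y : X) (n : ℕ), 1 ≤ n →
      (∀ k < n, dist (T^[k] x) (T^[k] y) < ε) →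
        |birkhoff T f n x - birkhoff T f n y| < κ) :
    (∃ q : X → ℝ, Continuous q ∧ ∀ x : X, f x = q (T x) - q x) ↔
      ∀ μ : Measure X, IsProbabilityMeasure μ → MeasurePreserving T μ μ →
        ∫ x, f x ∂μ = 0 := by
  constructor
  · rintro ⟨q, hq, hfq⟩ μ hμ hTμ
    have hqint : Integrable q μ :=
      hq.integrable_of_hasCompactSupport (HasCompactSupport.of_compactSpace q)
    have hqTint : Integrable (fun x => q (T x)) μ :=
      (hq.comp hT).integrable_of_hasCompactSupport
        (HasCompactSupport.of_compactSpace (q ∘ T))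
    have h1 : ∫ x, f x ∂μ = ∫ x, q (T x) ∂μ - ∫ x, q x ∂μ := by
      rw [← integral_sub hqTint hqint]
      exact integral_congr_ae (Filter.Eventually.of_forall fun x => hfq x)
    have h2 : ∫ x, q (T x) ∂μ = ∫ x, q x ∂μ := by
      calc ∫ x, q (T x) ∂μ = ∫ y, q y ∂(Measure.map T μ) :=
            (integral_map hT.measurable.aemeasurable
              (by rw [hTμ.map_eq]; exact hq.aestronglyMeasurable)).symm
        _ = ∫ y, q y ∂μ := by rw [hTμ.map_eq]
    rw [h1, h2, sub_self]
  · intro hInt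
    -- Birkhoff sums along periodic orbits vanish
    have hper : ∀ (y : X) (p : ℕ), 1 ≤ p → T^[p] y = y → birkhoff T f p y = 0 := by
      intro y p hp hy
      have hp0 : (p : ENNReal) ≠ 0 := Nat.cast_ne_zero.mpr (by omega)
      set μ : Measure X :=
        ((p : ENNReal)⁻¹) • ∑ k ∈ Finset.range p, Measure.dirac (T^[k] y) with hμdef
      have hprob : IsProbabilityMeasure μ := by
        constructor
        rw [hμdef, Measure.smul_apply, Measure.finset_sum_apply]
        simp [ENNReal.inv_mul_cancel hp0 (ENNReal.natCast_ne_top p)]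
      have hmapsum : Measure.map T (∑ k ∈ Finset.range p, Measure.dirac (T^[k] y))
          = ∑ k ∈ Finset.range p, Measure.dirac (T^[k + 1] y) := by
        rw [← Measure.mapₗ_apply_of_measurable hT.measurable, map_sum]
        refine Finset.sum_congr rfl fun k _ => ?_
        rw [Measure.mapₗ_apply_of_measurable hT.measurable,
          Measure.map_dirac' hT.measurable, ← Function.iterate_succ_apply' T k y]
      have hpres : MeasurePreserving T μ μ := by
        refine ⟨hT.measurable, ?_⟩
        rw [hμdef, Measure.map_smul, hmapsum]
        congr 1
        obtain ⟨m, rfl⟩ : ∃ m, p = m + 1 := ⟨p - 1, (Nat.succ_pred_eq_of_pos hp).symm⟩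
        rw [Finset.sum_range_succ, Finset.sum_range_succ']
        simp [hy]
      have h0 := hInt μ hprob hpres
      have hfint : ∀ k ∈ Finset.range p, Integrable f (Measure.dirac (T^[k] y)) :=
        fun k _ => hf.integrable_of_hasCompactSupport (HasCompactSupport.of_compactSpace f)
      rw [hμdef, integral_smul_measure, integral_finset_sum_measure hfint] at h0
      simp only [integral_dirac] at h0
      have hne : ((p : ENNReal)⁻¹).toReal ≠ 0 := by
        have : (p : ℝ) ≠ 0 := Nat.cast_ne_zero.mpr (by omega)
        simp [ENNReal.toReal_inv, this]
      have := (smul_eq_zero.mp h0).resolve_left hne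
      simpa [birkhoff] using this
    -- key estimate from Closing + Walters
    have key : ∀ κ : ℝ, 0 < κ → ∃ δ > (0 : ℝ), ∀ (z : X) (p : ℕ), 1 ≤ p →
        dist (T^[p] z) z < δ → |birkhoff T f p z| < κ := by
      intro κ hκ
      obtain ⟨ε, hε, hW⟩ := hWalters κ hκ
      obtain ⟨δ, hδ, hC⟩ := hClosing ε hε
      refine ⟨δ, hδ, fun z p hp hd => ?_⟩
      obtain ⟨y, hy, hk⟩ := hC z p hp hd
      have := hW z y p hp hk
      rwa [hper y p hp hy, sub_zero] at this
    obtain ⟨x0, hx0⟩ := hDense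
    set Φ : ℕ → ℝ := fun n => birkhoff T f n x0 with hΦ
    -- main estimate on Φ
    have hstep : ∀ κ > (0 : ℝ), ∃ δ > (0 : ℝ), ∀ m n : ℕ,
        dist (T^[n] x0) (T^[m] x0) < δ → |Φ n - Φ m| < κ := by
      intro κ hκ
      obtain ⟨δ, hδ, hkey⟩ := key κ hκ
      refine ⟨δ, hδ, ?_⟩
      have main : ∀ m n : ℕ, m ≤ n → dist (T^[n] x0) (T^[m] x0) < δ → |Φ n - Φ m| < κ := by
        intro m n hmn hd
        rcases Nat.eq_or_lt_of_le hmn with rfl | hlt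
        · simpa using hκ
        · set p := n - m with hpdef
          have hp : 1 ≤ p := by omega
          have hiter : T^[p] (T^[m] x0) = T^[n] x0 := by
            rw [← Function.iterate_add_apply]; congr 1; omega
          have hd' : dist (T^[p] (T^[m] x0)) (T^[m] x0) < δ := by rwa [hiter]
          have hb := hkey (T^[m] x0) p hp hd'
          have hΦn : Φ n = Φ m + birkhoff T f p (T^[m] x0) := by
            rw [hΦ]; dsimp only
            rw [← birkhoff_add]; congr 1; omega
          rw [hΦn]; simpa using hb
      intro m n hd
      rcases le_total m n with h | h
      · exact main m n h hd
      · have := main n m h (by rwa [dist_comm])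
        rwa [abs_sub_comm]
    -- well-definedness
    have hwd : ∀ m n : ℕ, T^[m] x0 = T^[n] x0 → Φ m = Φ n := by
      intro m n h
      by_contra hne
      have habs : 0 < |Φ n - Φ m| := abs_pos.mpr (sub_ne_zero.mpr (Ne.symm hne))
      obtain ⟨δ, hδ, hs⟩ := hstep _ habs
      have := hs m n (by rw [h]; simpa using hδ)
      exact absurd this (lt_irrefl _)
    set D : Set X := Set.range (fun n : ℕ => T^[n] x0) with hD
    let g : D → ℝ := fun x => Φ (x.2.choose)
    have hgval : ∀ (x : D) (n : ℕ), T^[n] x0 = (x : X) → g x = Φ n := by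
      intro x n hn
      exact hwd _ n ((x.2.choose_spec : T^[x.2.choose] x0 = (x : X)).trans hn.symm)
    have hgu : UniformContinuous g := by
      rw [Metric.uniformContinuous_iff]
      intro κ hκ
      obtain ⟨δ, hδ, hs⟩ := hstep κ hκ
      refine ⟨δ, hδ, ?_⟩
      intro a b hab
      obtain ⟨n, hn'⟩ := a.2
      obtain ⟨m, hm'⟩ := b.2
      have hn : T^[n] x0 = (a : X) := hn'
      have hm : T^[m] x0 = (b : X) := hm'
      rw [Subtype.dist_eq] at hab
      rw [hgval a n hn, hgval b m hm, Real.dist_eq]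
      exact hs m n (by rw [hn, hm]; exact hab)
    have hui : IsUniformInducing ((↑) : D → X) :=
      isUniformEmbedding_subtype_val.isUniformInducing
    have hdr : DenseRange ((↑) : D → X) := hx0.denseRange_val
    set di := hui.isDenseInducing hdr with hdi
    set q : X → ℝ := di.extend g with hqdef
    have hqc : Continuous q := (uniformContinuous_uniformly_extend hui hdr hgu).continuous
    have hqval : ∀ x : D, q x = g x := fun x => di.extend_eq hgu.continuous x
    refine ⟨q, hqc, ?_⟩
    have heq : Set.EqOn (fun x => f x) (fun x => q (T x) - q x) D := by
      rintro x ⟨n, rfl⟩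
      have h1 : q (T^[n] x0) = Φ n := by
        have hh := hqval ⟨T^[n] x0, ⟨n, rfl⟩⟩
        rw [hh, hgval _ n rfl]
      have h2 : q (T (T^[n] x0)) = Φ (n + 1) := by
        have hTn : T (T^[n] x0) = T^[n + 1] x0 := (Function.iterate_succ_apply' T n x0).symm
        rw [hTn]
        have hh := hqval ⟨T^[n + 1] x0, ⟨n + 1, rfl⟩⟩
        rw [hh, hgval _ (n + 1) rfl]
      simp only [h1, h2, hΦ]
      simp [birkhoff, Finset.sum_range_succ]
    have hfin := Continuous.ext_on hx0 hf ((hqc.comp hT).sub hqc) heq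
    exact fun x => congrFun hfin x
end
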